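/- arXiv:1408.1801 — 4 statements merged into one kernel-verified Lean document; each statement's English description precedes it below -/
import Mathlib

section
/- The function F(t, y; Λ) has one-sided continuity in y ∈ V in the direction φ: for every y ∈ V and every fixed t in a sufficiently small neighborhood of the origin of ℂ^{♯Λ}, lim_{c→0+} F(t, y + cφ; Λ) = F(t, y; Λ). -/
open scoped Real Pointwise Classical
open Filter

noncomputable section

namespace Stmt

abbrev Lam (r : ℕ) := (Fin r → ℤ) × ℂ

variable {r : ℕ}

def vecR (f : Lam r) : Fin r → ℝ := fun i => (f.1 i : ℝ)

def dot (x y : Fin r → ℝ) : ℝ := ∑ i, x i * y i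

def intCast' (v : Fin r → ℤ) : Fin r → ℝ := fun i => (v i : ℝ)

def intLattice (r : ℕ) : Set (Fin r → ℝ) := Set.range (intCast' (r := r))

def fval (f : Lam r) (v : Fin r → ℤ) : ℂ := ((∑ i, f.1 i * v i : ℤ) : ℂ) + f.2

def twoPiI : ℂ := 2 * Real.pi * Complex.I

def zrank (S : Set (Fin r → ℤ)) : ℕ := Module.finrank ℤ (Submodule.span ℤ S)

def vecSet (Λ : Finset (Lam r)) : Set (Fin r → ℤ) := Prod.fst '' (Λ : Set (Lam r))

def fullRank (Λ : Finset (Lam r)) : Prop := zrank (vecSet Λ) = r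

def tildeSet (Λ : Finset (Lam r)) : Set (Lam r) :=
  {f ∈ (Λ : Set (Lam r)) | zrank (vecSet Λ \ {f.1}) ≠ r}

def hyp (H : Finset (Lam r)) : Set (Fin r → ℝ) :=
  (Submodule.span ℝ (vecR '' (H : Set (Lam r))) : Submodule ℝ (Fin r → ℝ))

def isBasisSet (r : ℕ) (B : Finset (Lam r)) : Prop :=
  B.card = r ∧ LinearIndependent ℝ (fun f : B => vecR (f : Lam r))

def isRSet (r : ℕ) (R : Finset (Lam r)) : Prop :=
  R.card = r - 1 ∧ LinearIndependent ℝ (fun f : R => vecR (f : Lam r))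

def goodPhi (Λ : Finset (Lam r)) (φ : Fin r → ℝ) : Prop :=
  ∀ R ⊆ Λ, isRSet r R → φ ∉ hyp R

def dualVec (B : Finset (Lam r)) (f : Lam r) : Fin r → ℝ :=
  if h : ∃ u : Fin r → ℝ, ∀ g ∈ B, dot (vecR g) u = if g = f then 1 else 0
  then h.choose else 0

def mfract (φ : Fin r → ℝ) (B : Finset (Lam r)) (f : Lam r) (y : Fin r → ℝ) : ℝ :=
  if 0 < dot φ (dualVec B f) then Int.fract (dot y (dualVec B f))
  else 1 - Int.fract (- dot y (dualVec B f))

abbrev quotB (B : Finset (Lam r)) : Type := (Fin r → ℤ) ⧸ Submodule.span ℤ (vecSet B)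

def basisFinsets (Λ : Finset (Lam r)) : Finset (Finset (Lam r)) :=
  Λ.powerset.filter (fun B => isBasisSet r B)

def Fgen (Λ : Finset (Lam r)) (φ : Fin r → ℝ) (t : Lam r → ℂ) (y : Fin r → ℝ) : ℂ :=
  ∑ B ∈ basisFinsets Λ,
    (∏ g ∈ Λ \ B,
      t g / (t g - twoPiI * g.2 - ∑ f ∈ B, (t f - twoPiI * f.2) * (dot (vecR g) (dualVec B f) : ℂ)))
    * ((Nat.card (quotB B) : ℂ)⁻¹ *
      ∑ᶠ w : quotB B, ∏ f ∈ B,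
        t f * Complex.exp ((t f - twoPiI * f.2) *
            (mfract φ B f (fun i => y i + ((Quotient.out w : Fin r → ℤ) i : ℝ)) : ℂ))
          / (Complex.exp (t f - twoPiI * f.2) - 1))

def cube (r N : ℕ) : Finset (Fin r → ℤ) := Fintype.piFinset (fun _ => Finset.Icc (-(N:ℤ)) (N:ℤ))

def Zsum (Λ : Finset (Lam r)) (k : Lam r → ℕ) (y : Fin r → ℝ) (N : ℕ) : ℂ :=
  (-1 : ℂ) ^ (Λ.filter (fun f => k f = 0)).card *
  ∑ v ∈ cube r N,
    if (∀ f ∈ Λ, 0 < k f → fval f v ≠ 0) ∧ (∀ f ∈ Λ, k f = 0 → fval f v = 0) then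
      Complex.exp (twoPiI * (dot y (intCast' v) : ℂ)) *
        ∏ f ∈ Λ.filter (fun f => 0 < k f), ((fval f v) ^ (k f))⁻¹
    else 0

def Sdomain (Λ : Finset (Lam r)) (k : Lam r → ℕ) : Set (Fin r → ℝ) :=
  {y | y ∉ ⋃ f ∈ {f ∈ tildeSet Λ | k f = 1}, (hyp (Λ.erase f) + intLattice r)}

/-!
`F(t, y; Λ)` is a finite sum (the quotients `ℤ^r / ⟨B⃗⟩` are finite since `B⃗` has full rank)
of continuous functions of the multi-dimensional fractional parts `{y + w}_{B,f}`. Along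
`y + cφ` the number `⟨y, f⃗^B⟩` moves in the direction of the sign of `⟨φ, f⃗^B⟩`, and the
definition of `{·}_{B,f}` picks `{a}` (right continuous) or `1 - {-a}` (left continuous)
accordingly, so every fractional part, hence `F`, is continuous as `c → 0+`, for every `t`.
-/

theorem continuousWithinAt_fract_Ici (x : ℝ) : ContinuousWithinAt Int.fract (Set.Ici x) x :=
  ((continuousOn_fract ⌊x⌋).continuousWithinAt ⟨Int.floor_le x, Int.lt_floor_add_one x⟩)
    |>.mono_of_mem_nhdsWithin (Ico_mem_nhdsGE_of_mem ⟨Int.floor_le x, Int.lt_floor_add_one x⟩)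

theorem tendsto_add_mul_nhdsGT_nhdsGE (a : ℝ) {d : ℝ} (hd : 0 ≤ d) :
    Tendsto (fun c : ℝ => a + c * d) (nhdsWithin 0 (Set.Ioi 0)) (nhdsWithin a (Set.Ici a)) := by
  refine tendsto_nhdsWithin_iff.mpr ⟨?_, ?_⟩
  · have : Continuous fun c : ℝ => a + c * d := by fun_prop
    simpa using this.continuousWithinAt.tendsto (x := 0) (s := Set.Ioi 0)
  · filter_upwards [self_mem_nhdsWithin] with c (hc : 0 < c)
    simpa using mul_nonneg hc.le hd

theorem tendsto_fract_add_mul_nhdsGT (a : ℝ) {d : ℝ} (hd : 0 ≤ d) :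
    Tendsto (fun c : ℝ => Int.fract (a + c * d)) (nhdsWithin 0 (Set.Ioi 0))
      (nhds (Int.fract a)) :=
  (continuousWithinAt_fract_Ici a).tendsto.comp (tendsto_add_mul_nhdsGT_nhdsGE a hd)

theorem dot_add_smul (y φ u : Fin r → ℝ) (c : ℝ) :
    dot (y + c • φ) u = dot y u + c * dot φ u := by
  simp only [dot, Pi.add_apply, Pi.smul_apply, smul_eq_mul, add_mul, Finset.sum_add_distrib,
    Finset.mul_sum, mul_assoc]

theorem tendsto_mfract_add_smul (φ : Fin r → ℝ) (B : Finset (Lam r)) (f : Lam r)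
    (y : Fin r → ℝ) :
    Tendsto (fun c : ℝ => mfract φ B f (y + c • φ)) (nhdsWithin 0 (Set.Ioi 0))
      (nhds (mfract φ B f y)) := by
  simp only [mfract, dot_add_smul]
  split_ifs with hpos
  · exact tendsto_fract_add_mul_nhdsGT _ hpos.le
  · have hd : 0 ≤ -dot φ (dualVec B f) := neg_nonneg.mpr (not_lt.mp hpos)
    refine ((tendsto_fract_add_mul_nhdsGT _ hd).const_sub 1).congr fun c => ?_
    rw [neg_add, neg_mul_eq_mul_neg]

theorem linearIndependent_int_of_isBasisSet {B : Finset (Lam r)} (hB : isBasisSet r B) :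
    LinearIndependent ℤ (fun f : B => (f : Lam r).1) :=
  LinearIndependent.of_comp ((Int.castAddHom ℝ).toIntLinearMap.compLeft (Fin r))
    (hB.2.restrict_scalars' ℤ)

theorem finite_quotB {B : Finset (Lam r)} (hB : isBasisSet r B) : Finite (quotB B) := by
  refine Submodule.finiteQuotientOfFreeOfRankEq _ ?_
  rw [Module.finrank_fin_fun, vecSet, Set.image_eq_range]
  simpa [hB.1] using finrank_span_eq_card (linearIndependent_int_of_isBasisSet hB)

theorem tendsto_Fgen_add_smul (Λ : Finset (Lam r)) (φ : Fin r → ℝ) (t : Lam r → ℂ)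
    (y : Fin r → ℝ) :
    Tendsto (fun c : ℝ => Fgen Λ φ t (y + c • φ)) (nhdsWithin 0 (Set.Ioi 0))
      (nhds (Fgen Λ φ t y)) := by
  refine tendsto_finsetSum _ fun B hB => (Tendsto.const_mul _ (Tendsto.const_mul _ ?_))
  have := finite_quotB (Finset.mem_filter.mp hB).2
  have := Fintype.ofFinite (quotB B)
  simp only [finsum_eq_sum_of_fintype]
  refine tendsto_finsetSum _ fun w _ => tendsto_finsetProd _ fun f _ => ?_
  have hshift : ∀ c : ℝ, (fun i => (y + c • φ) i + ((Quotient.out w : Fin r → ℤ) i : ℝ))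
      = (fun i => y i + ((Quotient.out w : Fin r → ℤ) i : ℝ)) + c • φ := fun c => by
    funext i
    simp only [Pi.add_apply, Pi.smul_apply]
    ring
  simp only [hshift]
  have hmfract := Complex.continuous_ofReal.continuousAt.tendsto.comp
    (tendsto_mfract_add_smul φ B f (fun i => y i + ((Quotient.out w : Fin r → ℤ) i : ℝ)))
  exact ((Complex.continuous_exp.continuousAt.tendsto.comp
    (hmfract.const_mul _)).const_mul _).div_const _

theorem statement1_general (r : ℕ) (Λ : Finset (Lam r))
    (φ : Fin r → ℝ) :
    ∃ ε > (0 : ℝ), ∀ t : Lam r → ℂ, (∀ f ∈ Λ, ‖t f‖ < ε) →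
      ∀ y : Fin r → ℝ,
        Filter.Tendsto (fun c : ℝ => Fgen Λ φ t (y + c • φ))
          (nhdsWithin 0 (Set.Ioi 0)) (nhds (Fgen Λ φ t y)) :=
  ⟨1, one_pos, fun t _ y => tendsto_Fgen_add_smul Λ φ t y⟩

/-- one-sided continuity of the generating function `F(t,y;Λ)`
in `y`, in the direction `φ`, for every `t` in a sufficiently small
neighborhood of the origin of `ℂ^{♯Λ}`. -/
theorem statement1 (r : ℕ) (hr : 0 < r) (Λ : Finset (Lam r))
    (hne : ∀ f ∈ Λ, f.1 ≠ 0) (hrank : fullRank Λ)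
    (φ : Fin r → ℝ) (hφ : goodPhi Λ φ) :
    ∃ ε > (0 : ℝ), ∀ t : Lam r → ℂ, (∀ f ∈ Λ, ‖t f‖ < ε) →
      ∀ y : Fin r → ℝ,
        Filter.Tendsto (fun c : ℝ => Fgen Λ φ t (y + c • φ))
          (nhdsWithin 0 (Set.Ioi 0)) (nhds (Fgen Λ φ t y)) :=
  statement1_general r Λ φ

end Stmt
end
end

section
/- For every μ > 0 there exists a constant K > 0 such that for all a, z > 0, ∫₀^∞ e^{−xz}/√(x² + a²) dx ≤ K (az)^{−1/(μ+1)}. -/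
open scoped Real
open MeasureTheory

/-!
For `0 < α ≤ 1` the weighted AM–GM inequality gives
`x ^ (1 - α) * a ^ α ≤ max x a ≤ √(x² + a²)`, so the integrand is dominated by
`a ^ (-α) * x ^ (α - 1) * e^{-zx}`, whose integral over `(0, ∞)` is `Γ(α) (a z) ^ (-α)`.
Take `α = 1 / (μ + 1)` and `K = Γ(α)`.
-/

namespace Real

theorem rpow_mul_rpow_le_sqrt_sq_add_sq {x a α : ℝ} (hx : 0 ≤ x) (ha : 0 ≤ a) (hα₀ : 0 ≤ α)
    (hα₁ : α ≤ 1) : x ^ (1 - α) * a ^ α ≤ √(x ^ 2 + a ^ 2) :=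
  calc x ^ (1 - α) * a ^ α ≤ (1 - α) * x + α * a :=
        geom_mean_le_arith_mean2_weighted (by linarith) hα₀ hx ha (by ring)
    _ ≤ max x a := by nlinarith [le_max_left x a, le_max_right x a]
    _ ≤ √(x ^ 2 + a ^ 2) :=
        max_le (le_sqrt_of_sq_le (by nlinarith)) (le_sqrt_of_sq_le (by nlinarith))

theorem exp_neg_mul_div_sqrt_le {x a z α : ℝ} (hx : 0 < x) (ha : 0 < a) (hα₀ : 0 ≤ α)
    (hα₁ : α ≤ 1) :
    exp (-x * z) / √(x ^ 2 + a ^ 2) ≤ a ^ (-α) * (x ^ (α - 1) * exp (-(z * x))) :=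
  calc exp (-x * z) / √(x ^ 2 + a ^ 2) ≤ exp (-x * z) / (x ^ (1 - α) * a ^ α) := by
        gcongr
        exact rpow_mul_rpow_le_sqrt_sq_add_sq hx.le ha.le hα₀ hα₁
    _ = a ^ (-α) * (x ^ (α - 1) * exp (-(z * x))) := by
        rw [div_eq_mul_inv, mul_inv, ← rpow_neg hx.le, ← rpow_neg ha.le, neg_sub]
        ring_nf

theorem integral_exp_neg_mul_div_sqrt_le {a z α : ℝ} (ha : 0 < a) (hz : 0 < z) (hα₀ : 0 < α)
    (hα₁ : α ≤ 1) :
    ∫ x in Set.Ioi (0 : ℝ), exp (-x * z) / √(x ^ 2 + a ^ 2) ≤ Gamma α * (a * z) ^ (-α) := by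
  have hgamma := integral_rpow_mul_exp_neg_mul_Ioi hα₀ hz
  have hdom : IntegrableOn (fun x : ℝ => x ^ (α - 1) * exp (-(z * x))) (Set.Ioi 0) :=
    Integrable.of_integral_ne_zero <| by rw [hgamma]; exact (by positivity : (0 : ℝ) < _).ne'
  calc ∫ x in Set.Ioi (0 : ℝ), exp (-x * z) / √(x ^ 2 + a ^ 2)
      ≤ ∫ x in Set.Ioi (0 : ℝ), a ^ (-α) * (x ^ (α - 1) * exp (-(z * x))) :=
        integral_mono_of_nonneg (ae_of_all _ fun x => by positivity) (hdom.const_mul _) <|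
          (ae_restrict_mem measurableSet_Ioi).mono fun x hx =>
            exp_neg_mul_div_sqrt_le hx ha hα₀.le hα₁
    _ = Gamma α * (a * z) ^ (-α) := by
        rw [integral_const_mul, hgamma, mul_rpow ha.le hz.le, one_div, inv_rpow hz.le,
          ← rpow_neg hz.le]
        ring

end Real

/-- for every `μ > 0` there exists `K > 0` such that for all
`a, z > 0`, `∫₀^∞ e^{−xz}/√(x²+a²) dx ≤ K (az)^{−1/(μ+1)}`. -/
theorem statement7 (μ : ℝ) (hμ : 0 < μ) :
    ∃ K > (0 : ℝ), ∀ a z : ℝ, 0 < a → 0 < z →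
      (∫ x in Set.Ioi (0 : ℝ), Real.exp (-x * z) / Real.sqrt (x ^ 2 + a ^ 2)) ≤
        K * (a * z) ^ (-(1 / (μ + 1))) := by
  have hα₀ : 0 < 1 / (μ + 1) := by positivity
  have hα₁ : 1 / (μ + 1) ≤ 1 := by rw [div_le_one (by linarith)]; linarith
  exact ⟨Real.Gamma (1 / (μ + 1)), Real.Gamma_pos_of_pos hα₀, fun a z ha hz =>
    Real.integral_exp_neg_mul_div_sqrt_le ha hz hα₀ hα₁⟩
end

section
/- Let n ∈ ℕ and P, Q ∈ ℕ₀ with P ≥ Q. Let a_{ki} ∈ ℝ for 1 ≤ k ≤ P and 0 ≤ i ≤ n, such that for each k = 1, …, P there exists some i ≥ 1 with a_{ki} ≠ 0. If μ ≥ P, then the function (x₁,…,x_n) ↦ (∏_{k=1}^{Q} (1 − {a_{k0} + Σ_{i=1}^n a_{ki} x_i})^{−1/(μ+1)}) · (∏_{k=Q+1}^{P} {a_{k0} + Σ_{i=1}^n a_{ki} x_i}^{−1/(μ+1)}) is integrable over [0,1]^n, i.e., its integral over [0,1]^n is finite. -/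
/-!
Since the largest factor dominates, a product of `P` factors is at most the sum of their `P`-th
powers, so it suffices to integrate one factor raised to the power `r = -P/(μ+1) > -1`; and
`{-y} ≤ 1 - {y}` turns the factors of the first kind into factors of the second kind.
For a `1`-periodic `G`, integrating `G(c + ∑ aᵢxᵢ)` first in a variable with `aᵢ ≠ 0` and
substituting `u = c + aᵢxᵢ` bounds the integral by `|aᵢ|⁻¹` times the integral of `G` over a
fixed bounded interval, which is finite for `G = {·}^r` because `r > -1`.
-/

open scoped ENNReal
open MeasureTheory Set Function

lemma sum_mul_update_eq {R ι : Type*} [CommRing R] [Fintype ι] [DecidableEq ι] (a x : ι → R)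
    (i₀ : ι) (t : R) : ∑ i, a i * update x i₀ t i = ∑ i, a i * x i - a i₀ * x i₀ + a i₀ * t := by
  rw [← Finset.add_sum_erase _ _ (Finset.mem_univ i₀),
    ← Finset.add_sum_erase _ _ (Finset.mem_univ i₀),
    Finset.sum_congr rfl fun i hi => by rw [update_of_ne (Finset.ne_of_mem_erase hi)], update_self]
  ring

lemma setLIntegral_Icc_comp_affine_le {G : ℝ → ℝ≥0∞} (hG : Measurable G) {a : ℝ} (ha : a ≠ 0)
    (c : ℝ) :
    ∫⁻ t in Icc 0 1, G (c + a * t) ≤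
      ENNReal.ofReal |a⁻¹| * ∫⁻ u in Icc (c - |a|) (c + |a|), G u := by
  set H := (Icc (c - |a|) (c + |a|)).indicator G
  have hmap : Measure.map (fun t : ℝ => c + a * t) volume = ENNReal.ofReal |a⁻¹| • volume := by
    rw [show (fun t : ℝ => c + a * t) = (c + ·) ∘ (a * ·) from rfl,
      ← Measure.map_map (measurable_const_add c) (measurable_const_mul a),
      Real.map_volume_mul_left ha, Measure.map_smul, map_add_left_eq_self]
  have hmem : ∀ t ∈ Icc (0 : ℝ) 1, c + a * t ∈ Icc (c - |a|) (c + |a|) := fun t ht => by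
    have : |a * t| ≤ |a| := by
      rw [abs_mul]
      exact mul_le_of_le_one_right (abs_nonneg a) (abs_le.2 ⟨by linarith [ht.1], ht.2⟩)
    constructor <;> linarith [abs_le.1 this]
  calc ∫⁻ t in Icc 0 1, G (c + a * t) = ∫⁻ t in Icc 0 1, H (c + a * t) :=
        setLIntegral_congr_fun measurableSet_Icc fun t ht => (indicator_of_mem (hmem t ht) G).symm
    _ ≤ ∫⁻ t, H (c + a * t) := setLIntegral_le_lintegral _ _
    _ = ∫⁻ u, H u ∂(Measure.map (fun t : ℝ => c + a * t) volume) :=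
        (lintegral_map (hG.indicator measurableSet_Icc) (by fun_prop)).symm
    _ = ENNReal.ofReal |a⁻¹| * ∫⁻ u in Icc (c - |a|) (c + |a|), G u := by
        rw [hmap, lintegral_smul_measure, smul_eq_mul, lintegral_indicator measurableSet_Icc]

lemma Function.Periodic.setLIntegral_Icc_comp_affine_le {G : ℝ → ℝ≥0∞} (hG : Measurable G)
    (hper : Periodic G 1) {a : ℝ} (ha : a ≠ 0) (c : ℝ) :
    ∫⁻ t in Icc 0 1, G (c + a * t) ≤
      ENNReal.ofReal |a⁻¹| * ∫⁻ u in Icc (-(|a| + 1)) (|a| + 1), G u := by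
  have hshift : ∀ t, G (c + a * t) = G (Int.fract c + a * t) := fun t => by
    rw [← hper.sub_int_mul_eq ⌊c⌋, Int.fract]
    ring_nf
  simp_rw [hshift]
  refine (_root_.setLIntegral_Icc_comp_affine_le hG ha _).trans (mul_le_mul_right ?_ _)
  refine lintegral_mono_set (Icc_subset_Icc ?_ ?_) <;>
    linarith [Int.fract_nonneg c, Int.fract_lt_one c]

lemma setLIntegral_cube_comp_affine_le {ι : Type*} [Fintype ι] [DecidableEq ι] {G : ℝ → ℝ≥0∞}
    (hG : Measurable G) (c : ℝ) (a : ι → ℝ) (i₀ : ι) {C : ℝ≥0∞}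
    (hC : ∀ c', ∫⁻ t in Icc 0 1, G (c' + a i₀ * t) ≤ C) :
    ∫⁻ x in univ.pi fun _ : ι => Icc (0 : ℝ) 1, G (c + ∑ i, a i * x i) ≤ C := by
  have hf : Measurable fun x : ι → ℝ => G (c + ∑ i, a i * x i) := by fun_prop
  rw [volume_pi, Measure.restrict_pi_pi]
  calc ∫⁻ x, G (c + ∑ i, a i * x i) ∂(Measure.pi fun _ => volume.restrict (Icc (0 : ℝ) 1))
      ≤ ∫⁻ _, C ∂(Measure.pi fun _ => volume.restrict (Icc (0 : ℝ) 1)) := by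
        refine lintegral_le_of_lmarginal_le {i₀} hf measurable_const fun x => ?_
        simp only [lmarginal_singleton, sum_mul_update_eq, ← add_assoc]
        exact (hC _).trans (by simp [Real.volume_Icc])
    _ = C := by simp [Measure.pi_univ, Real.volume_Icc]

lemma Function.Periodic.setLIntegral_cube_comp_affine_lt_top {ι : Type*} [Fintype ι]
    {G : ℝ → ℝ≥0∞} (hG : Measurable G) (hper : Periodic G 1)
    (hloc : ∀ R, ∫⁻ u in Icc (-R) R, G u < ∞) (c : ℝ) {a : ι → ℝ} {i₀ : ι} (ha : a i₀ ≠ 0) :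
    ∫⁻ x in univ.pi fun _ : ι => Icc (0 : ℝ) 1, G (c + ∑ i, a i * x i) < ∞ := by
  classical
  exact (setLIntegral_cube_comp_affine_le hG c a i₀ fun c' =>
    hper.setLIntegral_Icc_comp_affine_le hG ha c').trans_lt
      (ENNReal.mul_lt_top ENNReal.ofReal_lt_top (hloc _))

lemma periodic_fract_rpow (r : ℝ) : Periodic (fun y : ℝ => Int.fract y ^ r) 1 := fun y => by
  simp only [Int.fract_add_one]

lemma intervalIntegrable_fract_rpow {r : ℝ} (hr : -1 < r) (a b : ℝ) :
    IntervalIntegrable (fun y => Int.fract y ^ r) volume a b := by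
  refine (periodic_fract_rpow r).intervalIntegrable₀ one_ne_zero ?_ a b
  rw [intervalIntegrable_iff_integrableOn_Ioo_of_le zero_le_one]
  refine ((intervalIntegrable_iff_integrableOn_Ioo_of_le zero_le_one).1
    (intervalIntegral.intervalIntegrable_rpow' hr)).congr_fun (fun y hy => ?_) measurableSet_Ioo
  rw [Int.fract_eq_self.2 ⟨hy.1.le, hy.2⟩]

lemma ae_fract_ne_zero : ∀ᵐ y : ℝ, Int.fract y ≠ 0 := by
  refine measure_mono_null (fun y hy => ?_) ((countable_range ((↑) : ℤ → ℝ)).measure_zero volume)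
  exact Int.fract_eq_zero_iff.1 (not_not.1 hy)

lemma setLIntegral_Icc_fract_rpow_lt_top {r : ℝ} (hr : -1 < r) (R : ℝ) :
    ∫⁻ y in Icc (-R) R, ENNReal.ofReal (Int.fract y) ^ r < ∞ := by
  have hae : (fun y => ENNReal.ofReal (Int.fract y) ^ r) =ᵐ[volume.restrict (Icc (-R) R)]
      fun y => ENNReal.ofReal (Int.fract y ^ r) :=
    ae_restrict_of_ae <| ae_fract_ne_zero.mono fun y hy =>
      ENNReal.ofReal_rpow_of_pos ((Int.fract_nonneg y).lt_of_ne' hy)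
  rw [lintegral_congr_ae hae]
  by_cases hR : -R ≤ R
  · exact ((intervalIntegrable_iff_integrableOn_Icc_of_le hR).1
      (intervalIntegrable_fract_rpow hr _ _)).setLIntegral_lt_top
  · simp [Icc_eq_empty hR]

lemma setLIntegral_cube_fract_comp_affine_rpow_lt_top {ι : Type*} [Fintype ι] {r : ℝ}
    (hr : -1 < r) (c : ℝ) {a : ι → ℝ} {i₀ : ι} (ha : a i₀ ≠ 0) :
    ∫⁻ x in univ.pi fun _ : ι => Icc (0 : ℝ) 1,
      ENNReal.ofReal (Int.fract (c + ∑ i, a i * x i)) ^ r < ∞ :=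
  Periodic.setLIntegral_cube_comp_affine_lt_top (by fun_prop)
    (fun y => by simp only [Int.fract_add_one]) (setLIntegral_Icc_fract_rpow_lt_top hr) c ha

lemma fract_neg_le_one_sub_fract {R : Type*} [Ring R] [LinearOrder R] [IsStrictOrderedRing R]
    [FloorRing R] (y : R) : Int.fract (-y) ≤ 1 - Int.fract y := by
  by_cases hy : Int.fract y = 0
  · rw [Int.fract_neg_eq_zero.2 hy, hy, sub_zero]; exact zero_le_one
  · rw [Int.fract_neg hy]

lemma ofReal_one_sub_fract_rpow_le {t : ℝ} (ht : 0 ≤ t) (y : ℝ) :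
    ENNReal.ofReal (1 - Int.fract y) ^ (-t) ≤ ENNReal.ofReal (Int.fract (-y)) ^ (-t) := by
  rw [ENNReal.rpow_neg, ENNReal.rpow_neg]
  gcongr
  exact fract_neg_le_one_sub_fract y

lemma prod_le_sum_pow_card {M ι : Type*} [CommSemiring M] [LinearOrder M] [IsOrderedRing M]
    [CanonicallyOrderedAdd M] (t : Finset ι) (w : ι → M) (ht : t.Nonempty) :
    ∏ k ∈ t, w k ≤ ∑ k ∈ t, w k ^ t.card := by
  obtain ⟨k0, hk0, hsup⟩ := Finset.exists_max_image t w ht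
  calc ∏ k ∈ t, w k ≤ w k0 ^ t.card := Finset.prod_le_pow_card t w _ hsup
    _ ≤ ∑ k ∈ t, w k ^ t.card :=
      Finset.single_le_sum (f := fun k => w k ^ t.card) (fun _ _ => zero_le) hk0

lemma prod_one_sub_fract_mul_prod_fract_rpow_le {ι : Type*} [Fintype ι] [Nonempty ι]
    (p : ι → Prop) [DecidablePred p] (y : ι → ℝ) {t : ℝ} (ht : 0 ≤ t) :
    (∏ k with p k, ENNReal.ofReal (1 - Int.fract (y k)) ^ (-t)) *
        ∏ k with ¬p k, ENNReal.ofReal (Int.fract (y k)) ^ (-t) ≤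
      ∑ k, ENNReal.ofReal (Int.fract (if p k then -y k else y k)) ^ (-t * Fintype.card ι) := by
  rw [← Finset.prod_ite]
  refine (prod_le_sum_pow_card _ _ Finset.univ_nonempty).trans (Finset.sum_le_sum fun k _ => ?_)
  rw [ENNReal.rpow_mul, ENNReal.rpow_natCast, Finset.card_univ]
  split_ifs
  · exact pow_le_pow_left₀ zero_le (ofReal_one_sub_fract_rpow_le ht _) _
  · rfl

theorem statement12_general (n : ℕ) (P Q : ℕ)
    (a0 : Fin P → ℝ) (a : Fin P → Fin n → ℝ)
    (ha : ∀ k : Fin P, ∃ i : Fin n, a k i ≠ 0)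
    (μ : ℝ) (hμ : (P : ℝ) ≤ μ) :
    (∫⁻ x in Set.pi Set.univ (fun _ : Fin n => Set.Icc (0 : ℝ) 1),
      (∏ k ∈ Finset.univ.filter (fun k : Fin P => (k : ℕ) < Q),
        (ENNReal.ofReal (1 - Int.fract (a0 k + ∑ i, a k i * x i))) ^ (-(1 / (μ + 1)))) *
      ∏ k ∈ Finset.univ.filter (fun k : Fin P => ¬ (k : ℕ) < Q),
        (ENNReal.ofReal (Int.fract (a0 k + ∑ i, a k i * x i))) ^ (-(1 / (μ + 1)))) < ⊤ := by
  rcases P.eq_zero_or_pos with rfl | hP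
  · simpa using measure_Icc_lt_top
  have : Nonempty (Fin P) := ⟨⟨0, hP⟩⟩
  have hμ₁ : 0 < μ + 1 := by linarith [(P.cast_nonneg : (0 : ℝ) ≤ P)]
  have hr : -1 < -(1 / (μ + 1)) * Fintype.card (Fin P) := by
    rw [Fintype.card_fin, neg_mul, neg_lt_neg_iff, one_div_mul_eq_div, div_lt_one hμ₁]
    linarith
  calc _ ≤ ∫⁻ x in univ.pi fun _ : Fin n => Icc (0 : ℝ) 1, ∑ k : Fin P,
          ENNReal.ofReal (Int.fract (if (k : ℕ) < Q then -(a0 k + ∑ i, a k i * x i)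
            else a0 k + ∑ i, a k i * x i)) ^ (-(1 / (μ + 1)) * Fintype.card (Fin P)) :=
        lintegral_mono fun x => prod_one_sub_fract_mul_prod_fract_rpow_le _ _ (by positivity)
    _ = ∑ k : Fin P, ∫⁻ x in univ.pi fun _ : Fin n => Icc (0 : ℝ) 1,
          ENNReal.ofReal (Int.fract (if (k : ℕ) < Q then -(a0 k + ∑ i, a k i * x i)
            else a0 k + ∑ i, a k i * x i)) ^ (-(1 / (μ + 1)) * Fintype.card (Fin P)) :=
        lintegral_finsetSum _ fun k _ => by split_ifs <;> fun_prop
    _ < ⊤ := ENNReal.sum_lt_top.2 fun k _ => ?_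
  obtain ⟨i₀, hi₀⟩ := ha k
  split_ifs
  · simp only [neg_add, ← Finset.sum_neg_distrib, ← neg_mul]
    exact setLIntegral_cube_fract_comp_affine_rpow_lt_top hr _ (neg_ne_zero.2 hi₀)
  · exact setLIntegral_cube_fract_comp_affine_rpow_lt_top hr _ hi₀

/-- integrability over `[0,1]^n` of
`(∏_{k=1}^{Q}(1−{a_{k0}+Σᵢa_{ki}xᵢ})^{−1/(μ+1)})·(∏_{k=Q+1}^{P}{a_{k0}+Σᵢa_{ki}xᵢ}^{−1/(μ+1)})`
when `μ ≥ P` (the integrand is interpreted in `[0,∞]`, with `0^{−1/(μ+1)} = ∞`). -/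
theorem statement12 (n : ℕ) (hn : 0 < n) (P Q : ℕ) (hPQ : Q ≤ P)
    (a0 : Fin P → ℝ) (a : Fin P → Fin n → ℝ)
    (ha : ∀ k : Fin P, ∃ i : Fin n, a k i ≠ 0)
    (μ : ℝ) (hμ : (P : ℝ) ≤ μ) :
    (∫⁻ x in Set.pi Set.univ (fun _ : Fin n => Set.Icc (0 : ℝ) 1),
      (∏ k ∈ Finset.univ.filter (fun k : Fin P => (k : ℕ) < Q),
        (ENNReal.ofReal (1 - Int.fract (a0 k + ∑ i, a k i * x i))) ^ (-(1 / (μ + 1)))) *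
      ∏ k ∈ Finset.univ.filter (fun k : Fin P => ¬ (k : ℕ) < Q),
        (ENNReal.ofReal (Int.fract (a0 k + ∑ i, a k i * x i))) ^ (-(1 / (μ + 1)))) < ⊤ :=
  statement12_general n P Q a0 a ha μ hμ
end

section
/- The sum Σ_{m ∈ ℤ, m ∉ {−1, 0, 1}} 1/((1−m)² m² (1+m)²) converges absolutely and equals π²/2 − 39/8. -/
/-!
By partial fractions, `invSqProd x = 1/x² - (3/2)/(x² - 1) + (1/(x-1)² + 1/(x+1)²)/4`, so
`invSqProd x = 3/(2x²) + φ x - φ (x+1)` with `φ = invSqProdTelescope → 0` at infinity.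
Summing over `m ≥ 2` gives `(3/2)(ζ(2) - 1) + φ 2 = π²/4 - 39/16`; as `invSqProd` is even,
the sum over `ℤ ∖ {-1, 0, 1}` is twice that.
-/

open scoped Real

open Filter Topology Finset

noncomputable def invSqProd (x : ℝ) : ℝ :=
  1 / ((1 - x) ^ 2 * x ^ 2 * (1 + x) ^ 2)

noncomputable def invSqProdTelescope (x : ℝ) : ℝ :=
  (1 / (x - 1) ^ 2 - 1 / x ^ 2) / 4 - 3 / 4 * (1 / (x - 1) + 1 / x)

lemma invSqProd_nonneg (x : ℝ) : 0 ≤ invSqProd x := by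
  unfold invSqProd; positivity

lemma invSqProd_neg (x : ℝ) : invSqProd (-x) = invSqProd x := by
  unfold invSqProd; ring_nf

lemma invSqProd_eq (x : ℝ) (hx : x ≠ 0) (hx₁ : x - 1 ≠ 0) (hx₂ : x + 1 ≠ 0) :
    invSqProd x = 3 / 2 * (1 / x ^ 2) + (invSqProdTelescope x - invSqProdTelescope (x + 1)) := by
  have hx₁' : 1 - x ≠ 0 := by rwa [← neg_sub, neg_ne_zero]
  have hx₂' : 1 + x ≠ 0 := by rwa [add_comm]
  unfold invSqProd invSqProdTelescope
  rw [add_sub_cancel_right]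
  field_simp
  ring

lemma tendsto_invSqProdTelescope_atTop : Tendsto invSqProdTelescope atTop (𝓝 0) := by
  have h₁ : Tendsto (fun x : ℝ => (x - 1)⁻¹) atTop (𝓝 0) :=
    tendsto_inv_atTop_zero.comp (tendsto_atTop_add_const_right _ (-1) tendsto_id)
  have h₀ : Tendsto (fun x : ℝ => x⁻¹) atTop (𝓝 0) := tendsto_inv_atTop_zero
  simpa using ((((h₁.pow 2).sub (h₀.pow 2)).div_const 4).sub ((h₁.add h₀).const_mul (3 / 4))).congr
    fun x => by simp [invSqProdTelescope]

lemma hasSum_one_div_nat_add_two_sq :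
    HasSum (fun n : ℕ => 1 / ((n : ℝ) + 2) ^ 2) (π ^ 2 / 6 - 1) := by
  simpa [sum_range_succ] using (hasSum_nat_add_iff' 2).2 hasSum_zeta_two

lemma hasSum_invSqProd_nat_add_two :
    HasSum (fun n : ℕ => invSqProd (n + 2)) (π ^ 2 / 4 - 39 / 16) := by
  rw [hasSum_iff_tendsto_nat_of_nonneg fun n => invSqProd_nonneg _]
  have hpartial (N : ℕ) : ∑ n ∈ range N, invSqProd (n + 2) =
      3 / 2 * ∑ n ∈ range N, 1 / ((n : ℝ) + 2) ^ 2 +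
        (invSqProdTelescope 2 - invSqProdTelescope (N + 2)) := by
    have := sum_range_sub' (fun n : ℕ => invSqProdTelescope (n + 2)) N
    push_cast [zero_add] at this
    rw [mul_sum, ← this, ← sum_add_distrib]
    refine sum_congr rfl fun n _ => ?_
    rw [invSqProd_eq _ (by positivity) (by linarith [n.cast_nonneg (α := ℝ)]) (by positivity)]
    ring_nf
  have htail : Tendsto (fun N : ℕ => invSqProdTelescope (N + 2)) atTop (𝓝 0) :=
    tendsto_invSqProdTelescope_atTop.comp
      (tendsto_atTop_add_const_right _ 2 tendsto_natCast_atTop_atTop)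
  simp_rw [hpartial]
  convert (hasSum_one_div_nat_add_two_sq.tendsto_sum_nat.const_mul (3 / 2)).add
    (tendsto_const_nhds.sub htail) using 2
  norm_num [invSqProdTelescope]
  ring

lemma hasSum_invSqProd_int : HasSum (fun m : ℤ => invSqProd m) (π ^ 2 / 2 - 39 / 8) := by
  have hpos : HasSum (fun n : ℕ => invSqProd ((n + 1 : ℤ) : ℝ)) (π ^ 2 / 4 - 39 / 16) := by
    refine (hasSum_nat_add_iff' (f := fun n : ℕ => invSqProd ((n + 1 : ℤ) : ℝ)) 1).1 ?_
    have hone : invSqProd ((0 + 1 : ℤ) : ℝ) = 0 := by norm_num [invSqProd]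
    simp only [sum_range_one, Nat.cast_zero, hone, sub_zero]
    push_cast
    simpa [add_assoc, one_add_one_eq_two] using hasSum_invSqProd_nat_add_two
  have hneg : HasSum (fun n : ℕ => invSqProd ((-(n + 1) : ℤ) : ℝ)) (π ^ 2 / 4 - 39 / 16) := by
    simpa only [Int.cast_neg, invSqProd_neg] using hpos
  convert HasSum.of_add_one_of_neg_add_one (f := fun m : ℤ => invSqProd m) hpos hneg using 1
  norm_num [invSqProd]
  ring

/-- the sum `Σ_{m∈ℤ, m∉{−1,0,1}} 1/((1−m)²m²(1+m)²)` converges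
absolutely and equals `π²/2 − 39/8`. -/
theorem statement19 :
    Summable (fun m : {m : ℤ // m ≠ -1 ∧ m ≠ 0 ∧ m ≠ 1} =>
      1 / ((1 - (m.1 : ℝ)) ^ 2 * (m.1 : ℝ) ^ 2 * (1 + (m.1 : ℝ)) ^ 2)) ∧
    ∑' m : {m : ℤ // m ≠ -1 ∧ m ≠ 0 ∧ m ≠ 1},
        1 / ((1 - (m.1 : ℝ)) ^ 2 * (m.1 : ℝ) ^ 2 * (1 + (m.1 : ℝ)) ^ 2) =
      Real.pi ^ 2 / 2 - 39 / 8 := by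
  -- `1 / 0 = 0` makes `invSqProd` vanish at `-1, 0, 1`, so the sum may run over all of `ℤ`.
  have hsupport : Function.support (fun m : ℤ => invSqProd m) ⊆ {m | m ≠ -1 ∧ m ≠ 0 ∧ m ≠ 1} := by
    intro m hm
    refine ⟨?_, ?_, ?_⟩ <;> rintro rfl <;> simp [invSqProd] at hm
  have hsum := (hasSum_subtype_iff_of_support_subset hsupport).2 hasSum_invSqProd_int
  exact ⟨hsum.summable, hsum.tsum_eq⟩
end
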